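/- arXiv:math/0508034 — 2 statements merged into one kernel-verified Lean document; each statement's English description precedes it below -/
import Mathlib

section
/- Let m ≥ 3 be odd, let k be a positive integer with gcd(k, m) = 1, and set d = 2^k + 1 (a Gold exponent). Assume the power function x ↦ x^d on F = GF(2^m) is maximum nonlinear. Then for all α, β ∈ F \ {0} with α ≠ β and all i, j ∈ GF(2), the cardinality |H^{i,j}(α,β) ∩ D_d| belongs to the set {2^(m-3), 2^(m-3) - 2^((m-3)/2), 2^(m-3) + 2^((m-3)/2)}. -/
attribute [local instance] Classical.propDecidable

noncomputable instance (m : ℕ) : Fintype (GaloisField 2 m) := Fintype.ofFinite _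

/-- The absolute trace map from `GF(2^m)` to `GF(2)`. -/
noncomputable def tr (m : ℕ) (x : GaloisField 2 m) : ZMod 2 :=
  Algebra.trace (ZMod 2) (GaloisField 2 m) x

/-- `(-1)^t` as an integer, for `t ∈ GF(2)`. -/
def chi (t : ZMod 2) : ℤ := (-1) ^ t.val

/-- The Walsh coefficient `∑_{x ∈ F} (-1)^(tr(γx + βx^d))` of the power map `x ↦ x^d`. -/
noncomputable def walsh (m d : ℕ) (β γ : GaloisField 2 m) : ℤ :=
  ∑ x : GaloisField 2 m, chi (tr m (γ * x + β * x ^ d))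

/-- The power function `x ↦ x^d` on `GF(2^m)` is maximum nonlinear (almost bent). -/
def MaxNonlinear (m d : ℕ) : Prop :=
  ∀ β : GaloisField 2 m, β ≠ 0 → ∀ γ : GaloisField 2 m,
    walsh m d β γ ∈ ({0, 2 ^ ((m + 1) / 2), -(2 ^ ((m + 1) / 2))} : Set ℤ)

/-- `D_d = {x ∈ F : tr(x^d) = 1}`. -/
noncomputable def Dd (m d : ℕ) : Finset (GaloisField 2 m) :=
  Finset.univ.filter (fun x => tr m (x ^ d) = 1)

/-- `H^i(α) = {x ∈ F : tr(αx) = i}`. -/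
noncomputable def Hi (m : ℕ) (α : GaloisField 2 m) (i : ZMod 2) :
    Finset (GaloisField 2 m) :=
  Finset.univ.filter (fun x => tr m (α * x) = i)

/-- `H^{i,j}(α,β) = {x ∈ F : tr(αx) = i and tr(βx) = j}`. -/
noncomputable def Hij (m : ℕ) (α β : GaloisField 2 m) (i j : ZMod 2) :
    Finset (GaloisField 2 m) :=
  Finset.univ.filter (fun x => tr m (α * x) = i ∧ tr m (β * x) = j)

/-!
Write `W(γ) = ∑ₓ χ(tr(γx + x^d))`. Expanding the indicator of `H^{i,j}(α,β) ∩ D_d` as a product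
of three factors `(1 ± χ)/2` gives
`8 |H^{i,j}(α,β) ∩ D_d| = 2^m - (W(0) ± W(α) ± W(β) ± W(α+β))`.
For the Gold exponent, substituting `y = x + z` in `W(γ)²` leaves a character sum of the
symmetric form `tr(x^(2^k) z + z^(2^k) x)`, whose radical is `{0, 1}` because `gcd(2k, m) = 1`;
hence `W(γ)² = 2^(m+1)` if `tr γ = 1` and `W(γ) = 0` otherwise. As
`tr(α + β) = tr α + tr β`, either none or exactly two of `W(α), W(β), W(α+β)` are nonzero, each
`±2^((m+1)/2)`, so the signed sum lies in `{0, ±2^((m+3)/2)}`.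
-/

open Finset

lemma zmod_two_eq_zero_or_eq_one : ∀ a : ZMod 2, a = 0 ∨ a = 1 := by decide

lemma chi_zero : chi 0 = 1 := rfl

lemma chi_one : chi 1 = -1 := rfl

lemma chi_add : ∀ a b : ZMod 2, chi (a + b) = chi a * chi b := by decide

lemma chi_add_one : ∀ a : ZMod 2, chi (a + 1) = -chi a := by decide

lemma chi_sq : ∀ a : ZMod 2, chi a ^ 2 = 1 := by decide

lemma sq_sum_chi {G : Type*} [AddCommGroup G] [Fintype G] (f : G → ZMod 2) :
    (∑ x, chi (f x)) ^ 2 = ∑ z, ∑ x, chi (f x + f (x + z)) := by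
  rw [sq, sum_mul_sum, sum_comm (s := univ) (t := univ) (f := fun z x => chi (f x + f (x + z)))]
  refine Fintype.sum_congr _ _ fun x => ?_
  rw [← Equiv.sum_comp (Equiv.addLeft x)]
  simp only [Equiv.coe_addLeft, chi_add]

section Trace

variable {m : ℕ}

lemma card_galoisField (hm : m ≠ 0) : Fintype.card (GaloisField 2 m) = 2 ^ m := by
  rw [Fintype.card_eq_nat_card, GaloisField.card 2 m hm]

lemma tr_zero : tr m 0 = 0 := map_zero _

lemma tr_add (x y : GaloisField 2 m) : tr m (x + y) = tr m x + tr m y := map_add _ _ _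

lemma tr_pow_two_pow (n : ℕ) (x : GaloisField 2 m) : tr m (x ^ 2 ^ n) = tr m x := by
  have h := Algebra.trace_eq_of_algEquiv
    (FiniteField.frobeniusAlgEquivOfAlgebraic (ZMod 2) (GaloisField 2 m) ^ n) x
  rwa [AlgEquiv.coe_pow, FiniteField.coe_frobeniusAlgEquivOfAlgebraic_iterate, ZMod.card] at h

lemma tr_one (hm : Odd m) : tr m 1 = 1 := by
  have h := Algebra.trace_algebraMap (S := GaloisField 2 m) (1 : ZMod 2)
  rw [map_one, GaloisField.finrank 2 (Nat.ne_of_odd_add hm)] at h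
  rw [tr, h, nsmul_eq_mul, mul_one, ZMod.natCast_eq_one_iff_odd]
  exact hm

lemma sum_chi_tr_mul (hm : m ≠ 0) (c : GaloisField 2 m) :
    ∑ x, chi (tr m (c * x)) = if c = 0 then 2 ^ m else 0 := by
  split_ifs with hc
  · simp [hc, tr, chi, card_galoisField hm]
  obtain ⟨b, hb⟩ : ∃ b, tr m (c * b) = 1 := by
    by_contra! h
    refine hc ((traceForm_nondegenerate (ZMod 2) (GaloisField 2 m)).1 c fun y => ?_)
    rw [Algebra.traceForm_apply]
    exact (by decide : ∀ t : ZMod 2, t ≠ 1 → t = 0) _ (h y)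
  have hshift := Equiv.sum_comp (Equiv.addRight b) fun x => chi (tr m (c * x))
  simp only [Equiv.coe_addRight, mul_add, tr_add, hb, chi_add_one, sum_neg_distrib] at hshift
  linarith

lemma eq_zero_or_one_of_pow_two_pow_eq_self (hm : m ≠ 0) {n : ℕ} (hnm : n.Coprime m)
    {z : GaloisField 2 m} (hz : z ^ 2 ^ n = z) : z = 0 ∨ z = 1 := by
  have hperiodic : ∀ {l}, z ^ 2 ^ l = z → Function.IsPeriodicPt (· ^ 2) l z := fun h => by
    rwa [Function.IsPeriodicPt, Function.IsFixedPt, pow_iterate]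
  have hfrob : z ^ 2 ^ m = z := by
    rw [← card_galoisField hm]
    exact FiniteField.pow_card z
  have h := (hperiodic hz).gcd (hperiodic hfrob)
  rw [hnm, Function.IsPeriodicPt, Function.IsFixedPt, pow_iterate, pow_one] at h
  exact IsIdempotentElem.iff_eq_zero_or_one.1 (by rw [IsIdempotentElem, ← sq]; exact h)

end Trace

section Gold

variable {m k : ℕ}

lemma add_pow_two_pow_add_one {R : Type*} [CommRing R] [CharP R 2] (x z : R) :
    (x + z) ^ (2 ^ k + 1) =
      x ^ (2 ^ k + 1) + z ^ (2 ^ k + 1) + (x ^ 2 ^ k * z + z ^ 2 ^ k * x) := by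
  rw [pow_succ, add_pow_char_pow]
  ring

/-- The radical of the symmetric form `tr (x^(2^k) z + z^(2^k) x)` is `{0, 1}`: with
`w^(2^k) = z`, the form is `tr ((w + z^(2^k)) x)`, and `w = z^(2^k)` forces `z^(2^(2k)) = z`. -/
lemma exists_tr_gold_form_eq (hm : Odd m) (hkm : k.Coprime m) (z : GaloisField 2 m) :
    ∃ c, (c = 0 ↔ z = 0 ∨ z = 1) ∧
      ∀ x, tr m (x ^ 2 ^ k * z + z ^ 2 ^ k * x) = tr m (c * x) := by
  set φ := iterateFrobeniusEquiv (GaloisField 2 m) 2 k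
  have hφ : ∀ y, φ y = y ^ 2 ^ k := fun y => rfl
  set w := φ.symm z
  have hw : w ^ 2 ^ k = z := by rw [← hφ, RingEquiv.apply_symm_apply]
  refine ⟨w + z ^ 2 ^ k, ?_, fun x => ?_⟩
  · rw [CharTwo.add_eq_zero]
    constructor
    · intro h
      refine eq_zero_or_one_of_pow_two_pow_eq_self (Nat.ne_of_odd_add hm)
        (Nat.Coprime.mul_left (Nat.coprime_two_left.2 hm) hkm) ?_
      rw [two_mul, pow_add, pow_mul, ← h, hw]
    · rintro (rfl | rfl) <;> simp [w]
  · rw [tr_add, add_mul, tr_add, mul_comm _ z, ← hw, ← mul_pow, tr_pow_two_pow, mul_comm]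

lemma sum_chi_tr_gold_form (hm : Odd m) (hkm : k.Coprime m) (z : GaloisField 2 m) :
    ∑ x, chi (tr m (x ^ 2 ^ k * z + z ^ 2 ^ k * x)) = if z = 0 ∨ z = 1 then 2 ^ m else 0 := by
  obtain ⟨c, hc, htr⟩ := exists_tr_gold_form_eq hm hkm z
  simp only [htr, sum_chi_tr_mul (Nat.ne_of_odd_add hm), hc]

lemma walsh_one_eq (d : ℕ) (γ : GaloisField 2 m) :
    walsh m d 1 γ = ∑ x, chi (tr m (γ * x + x ^ d)) := by
  simp only [walsh, one_mul]

lemma walsh_gold_sq (hm : Odd m) (hkm : k.Coprime m) (γ : GaloisField 2 m) :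
    walsh m (2 ^ k + 1) 1 γ ^ 2 = if tr m γ = 0 then 0 else 2 ^ (m + 1) := by
  have hdiff : ∀ z x : GaloisField 2 m,
      tr m (γ * x + x ^ (2 ^ k + 1)) + tr m (γ * (x + z) + (x + z) ^ (2 ^ k + 1)) =
        tr m (γ * z + z ^ (2 ^ k + 1)) + tr m (x ^ 2 ^ k * z + z ^ 2 ^ k * x) := by
    intro z x
    rw [← tr_add, ← tr_add, add_pow_two_pow_add_one]
    congr 1
    linear_combination (γ * x + x ^ (2 ^ k + 1)) * CharTwo.two_eq_zero (R := GaloisField 2 m)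
  rw [walsh_one_eq, sq_sum_chi]
  simp only [hdiff, chi_add, ← mul_sum, sum_chi_tr_gold_form hm hkm]
  rw [Fintype.sum_eq_add 0 1 zero_ne_one fun z hz => by simp [hz]]
  simp only [mul_zero, zero_add, zero_pow (Nat.succ_ne_zero _), mul_one, one_pow, tr_add,
    tr_one hm, true_or, or_true, if_true]
  rw [tr_zero, chi_add_one, chi_zero]
  obtain h | h := zmod_two_eq_zero_or_eq_one (tr m γ)
  · simp [h, chi_zero]
  · simp [h, chi_one]
    ring

end Gold

/-- `8 [a = i] [b = j] [c = 1] = (1 + χ i χ a) (1 + χ j χ b) (1 - χ c)`, multiplied out. -/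
lemma eight_mul_ite_eq : ∀ a b c i j : ZMod 2,
    (if a = i ∧ b = j ∧ c = 1 then 8 else 0 : ℤ) =
      1 + chi i * chi a + chi j * chi b + chi i * chi j * chi (a + b) - chi c
        - chi i * chi (a + c) - chi j * chi (b + c) - chi i * chi j * chi (a + b + c) := by
  decide

lemma eight_mul_card_inter_Dd {m : ℕ} (hm : m ≠ 0) (d : ℕ) {α β : GaloisField 2 m}
    (hα : α ≠ 0) (hβ : β ≠ 0) (hαβ : α + β ≠ 0) (i j : ZMod 2) :
    8 * ((Hij m α β i j ∩ Dd m d).card : ℤ) =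
      2 ^ m - (walsh m d 1 0 + chi i * walsh m d 1 α + chi j * walsh m d 1 β
        + chi i * chi j * walsh m d 1 (α + β)) := by
  have hcard : ((Hij m α β i j ∩ Dd m d).card : ℤ) =
      ∑ x, if tr m (α * x) = i ∧ tr m (β * x) = j ∧ tr m (x ^ d) = 1 then 1 else 0 := by
    simp only [Hij, Dd, ← filter_and, and_assoc, card_filter]
    push_cast
    rfl
  rw [hcard, mul_sum]
  simp only [mul_ite, mul_one, mul_zero, eight_mul_ite_eq, ← tr_add, ← add_mul,
    sum_add_distrib, sum_sub_distrib, ← mul_sum, sum_chi_tr_mul hm, hα, hβ, hαβ, walsh_one_eq,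
    zero_mul, zero_add, if_false, mul_zero, add_zero, sum_const, card_univ, card_galoisField hm]
  ring

lemma add_add_mem_of_sq_eq_ite {c u v w : ℤ} {a b : ZMod 2}
    (hu : u ^ 2 = if a = 0 then 0 else c ^ 2) (hv : v ^ 2 = if b = 0 then 0 else c ^ 2)
    (hw : w ^ 2 = if a + b = 0 then 0 else c ^ 2) :
    u + v + w ∈ ({0, 2 * c, -(2 * c)} : Set ℤ) := by
  obtain rfl | rfl := zmod_two_eq_zero_or_eq_one a <;>
    obtain rfl | rfl := zmod_two_eq_zero_or_eq_one b <;>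
    simp only [if_true, if_false, zero_add, add_zero, one_ne_zero, sq_eq_zero_iff,
      sq_eq_sq_iff_eq_or_eq_neg, show (1 + 1 : ZMod 2) = 0 from rfl] at hu hv hw
  all_goals
    simp only [Set.mem_insert_iff, Set.mem_singleton_iff]
    omega

lemma mem_of_eight_mul_eq {t : ℕ} {N S : ℤ}
    (hS : S ∈ ({0, 2 * 2 ^ (t + 2), -(2 * 2 ^ (t + 2))} : Set ℤ))
    (h : 8 * N = 2 ^ (2 * t + 3) - S) :
    N ∈ ({2 ^ (2 * t), 2 ^ (2 * t) - 2 ^ t, 2 ^ (2 * t) + 2 ^ t} : Set ℤ) := by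
  have h8 : (2 : ℤ) ^ (2 * t + 3) = 8 * 2 ^ (2 * t) := by ring
  have h8' : (2 : ℤ) * 2 ^ (t + 2) = 8 * 2 ^ t := by ring
  rw [h8'] at hS
  simp only [Set.mem_insert_iff, Set.mem_singleton_iff]
  rcases hS with rfl | rfl | rfl
  · left; linarith
  · right; left; linarith
  · right; right; linarith

theorem stmt0_general (m : ℕ) (hm3 : 3 ≤ m) (hmodd : Odd m) (k : ℕ)
    (hkm : Nat.gcd k m = 1) (d : ℕ) (hd : d = 2 ^ k + 1) :
    ∀ α β : GaloisField 2 m, α ≠ 0 → β ≠ 0 → α ≠ β → ∀ i j : ZMod 2,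
      ((Hij m α β i j ∩ Dd m d).card : ℤ) ∈
        ({2 ^ (m - 3), 2 ^ (m - 3) - 2 ^ ((m - 3) / 2),
          2 ^ (m - 3) + 2 ^ ((m - 3) / 2)} : Set ℤ) := by
  intro α β hα hβ hαβ i j
  subst hd
  obtain ⟨t, rfl⟩ : ∃ t, m = 2 * t + 3 := by
    obtain ⟨s, rfl⟩ := hmodd
    exact ⟨s - 1, by omega⟩
  have hsq (γ : GaloisField 2 (2 * t + 3)) :
      walsh _ (2 ^ k + 1) 1 γ ^ 2 = if tr _ γ = 0 then 0 else (2 ^ (t + 2)) ^ 2 := by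
    rw [walsh_gold_sq hmodd hkm]
    ring_nf
  have hW0 : walsh (2 * t + 3) (2 ^ k + 1) 1 0 = 0 := by
    simpa [tr_zero] using hsq 0
  have hS := add_add_mem_of_sq_eq_ite (c := 2 ^ (t + 2)) (a := tr _ α) (b := tr _ β)
    (u := chi i * walsh _ (2 ^ k + 1) 1 α) (v := chi j * walsh _ (2 ^ k + 1) 1 β)
    (w := chi i * chi j * walsh _ (2 ^ k + 1) 1 (α + β))
    (by rw [mul_pow, chi_sq, one_mul, hsq]) (by rw [mul_pow, chi_sq, one_mul, hsq])
    (by rw [mul_pow, mul_pow, chi_sq, chi_sq, one_mul, one_mul, hsq, tr_add])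
  rw [show 2 * t + 3 - 3 = 2 * t by omega, show 2 * t / 2 = t by omega]
  refine mem_of_eight_mul_eq hS ?_
  have hαβ' : α + β ≠ 0 := fun h => hαβ (CharTwo.add_eq_zero.1 h)
  rw [eight_mul_card_inter_Dd (by omega) _ hα hβ hαβ' i j, hW0]
  ring

/-- For a Gold exponent `d = 2^k + 1` with `gcd(k, m) = 1` on `GF(2^m)` (`m ≥ 3`
odd) whose power map is maximum nonlinear, all intersections of `D_d` with the codimension-2
subspaces `H^{i,j}(α,β)` have size `2^(m-3)` or `2^(m-3) ± 2^((m-3)/2)`. -/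
theorem stmt0 (m : ℕ) (hm3 : 3 ≤ m) (hmodd : Odd m) (k : ℕ) (hk : 0 < k)
    (hkm : Nat.gcd k m = 1) (d : ℕ) (hd : d = 2 ^ k + 1)
    (hmax : MaxNonlinear m d) :
    ∀ α β : GaloisField 2 m, α ≠ 0 → β ≠ 0 → α ≠ β → ∀ i j : ZMod 2,
      ((Hij m α β i j ∩ Dd m d).card : ℤ) ∈
        ({2 ^ (m - 3), 2 ^ (m - 3) - 2 ^ ((m - 3) / 2),
          2 ^ (m - 3) + 2 ^ ((m - 3) / 2)} : Set ℤ) :=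
  stmt0_general m hm3 hmodd k hkm d hd
end

section
/- For every x in the finite field GF(2^8) with 256 elements, tr(x^51 + (x+1)^51 + 1) = 0, where tr : GF(2^8) → GF(2) is the absolute trace; moreover there is no integer k with 51 = 2^k + 1. (This shows that the characterization 'tr(x^d + (x+1)^d + 1) = 0 for all x implies d = 2^k + 1' fails when m is even.) -/
attribute [local instance] Classical.propDecidable

/-! With `q = 2 ^ k` and `#F = q ^ 2`, the map `σ z = z ^ q` is an involutive automorphism of `F`,
and the absolute trace is invariant under both `σ` and squaring. For `d = 3 (q + 1)` one has
`x ^ d = x ^ 3 σ(x ^ 3)`, and putting `y = σ x`, in characteristic two the polynomial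
`x³y³ + (x + 1)³(y + 1)³ + 1` splits into terms `z + σ z` and `n + n ^ 2`, each of trace zero.
For `m = 8` this gives `d = 51`, and `51 - 1` is not a power of two since `5 ∣ 50`. -/

namespace Algebra

variable {K L : Type*} [Field K] [Fintype K] [Field L] [Finite L] [Algebra K L]

theorem trace_pow_card (x : L) : trace K L (x ^ Fintype.card K) = trace K L x :=
  trace_eq_of_algEquiv (FiniteField.frobeniusAlgEquivOfAlgebraic K L) x

theorem trace_pow_card_pow (x : L) (n : ℕ) :
    trace K L (x ^ Fintype.card K ^ n) = trace K L x := by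
  induction n with
  | zero => simp
  | succ n ih => rw [pow_succ, pow_mul, trace_pow_card, ih]

end Algebra

theorem CharTwo.cube_mul_cube_add_add_one_cube_mul_add_one_cube {R : Type*} [CommRing R]
    [CharP R 2] (x y : R) :
    x ^ 3 * y ^ 3 + (x + 1) ^ 3 * (y + 1) ^ 3 + 1 =
      (x ^ 3 * (y ^ 2 + y) + y ^ 3 * (x ^ 2 + x)) + (x ^ 3 + y ^ 3) + ((x ^ 2 + x) + (y ^ 2 + y))
        + (x ^ 2 * y + y ^ 2 * x) + (x * y + (x * y) ^ 2) := by
  have add_one_cube (z : R) : (z + 1) ^ 3 = z ^ 3 + z ^ 2 + z + 1 := by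
    linear_combination (z ^ 2 + z) * CharTwo.two_eq_zero (R := R)
  rw [add_one_cube, add_one_cube]
  linear_combination (x ^ 3 * y ^ 3 + 1) * CharTwo.two_eq_zero (R := R)

section TraceOverZModTwo

variable {L : Type*} [Field L] [Finite L] [Algebra (ZMod 2) L]

theorem trace_add_pow_two_pow (z : L) (n : ℕ) :
    Algebra.trace (ZMod 2) L (z + z ^ 2 ^ n) = 0 := by
  have h := Algebra.trace_pow_card_pow (K := ZMod 2) z n
  rw [ZMod.card] at h
  rw [map_add, h, CharTwo.add_self_eq_zero]

theorem trace_pow_add_add_one_pow_add_one_eq_zero (k : ℕ) (hL : Nat.card L = 2 ^ (2 * k))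
    (x : L) :
    Algebra.trace (ZMod 2) L (x ^ (3 * (2 ^ k + 1)) + (x + 1) ^ (3 * (2 ^ k + 1)) + 1) = 0 := by
  have : CharP L 2 := charP_of_injective_algebraMap' (ZMod 2) 2
  have : Fintype L := Fintype.ofFinite L
  set σ := iterateFrobenius L 2 k
  have hσ (z : L) : σ z = z ^ 2 ^ k := rfl
  have hσσ (z : L) : σ (σ z) = z := by
    rw [hσ, hσ, ← pow_mul, ← pow_add, ← two_mul, ← hL, Nat.card_eq_fintype_card,
      FiniteField.pow_card]
  have hpow (z : L) : z ^ (3 * (2 ^ k + 1)) = z ^ 3 * σ z ^ 3 := by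
    rw [hσ, ← pow_mul, ← pow_add]
    ring
  have hsplit : x ^ (3 * (2 ^ k + 1)) + (x + 1) ^ (3 * (2 ^ k + 1)) + 1 =
      (x ^ 3 * (σ x ^ 2 + σ x) + σ (x ^ 3 * (σ x ^ 2 + σ x))) + (x ^ 3 + σ (x ^ 3))
        + ((x ^ 2 + x) + σ (x ^ 2 + x)) + (x ^ 2 * σ x + σ (x ^ 2 * σ x))
        + (x * σ x + (x * σ x) ^ 2 ^ 1) := by
    simp only [hpow, map_add, map_mul, map_pow, map_one, hσσ, pow_one]
    exact CharTwo.cube_mul_cube_add_add_one_cube_mul_add_one_cube x (σ x)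
  rw [hsplit, map_add, map_add, map_add, map_add]
  simp only [hσ, trace_add_pow_two_pow, add_zero]

end TraceOverZModTwo

/-- In `GF(2^8)` one has `tr(x^51 + (x+1)^51 + 1) = 0` for all `x`, yet `51`
is not of the form `2^k + 1`; so the Gold characterization fails for even `m`. -/
theorem stmt13 :
    (∀ x : GaloisField 2 8, tr 8 (x ^ 51 + (x + 1) ^ 51 + 1) = 0) ∧
    ¬ ∃ k : ℕ, 51 = 2 ^ k + 1 := by
  refine ⟨trace_pow_add_add_one_pow_add_one_eq_zero 4 (GaloisField.card 2 8 (by norm_num)), ?_⟩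
  rintro ⟨k, hk⟩
  have h5 : 5 ∣ 2 ^ k := ⟨10, by omega⟩
  exact absurd (Nat.prime_five.dvd_of_dvd_pow h5) (by norm_num)
end
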